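/- Assume Σ_r := Σ_{i=1}^m ‖r_i‖₁ ≥ (m−1)‖r_k‖₁ + s for all k ∈ [m], and let r̄_k^{(1)} = [r_k, Σ_r/(m−1) − ‖r_k‖₁ − s/(m−1)] ∈ ℝ^{n+1}_+. Then every tensor X̄ ∈ Π(r̄_1^{(1)},…,r̄_m^{(1)}) satisfies Σ_{v ∈ [n]^m} X̄_v ≥ s; in particular, there exists u ∈ [n]^m with X̄_u > 0 whenever s > 0. -/

import Mathlib

open Finset

noncomputable section

namespace MPOT

/-- The `k`-th marginal of a tensor indexed by `[n]^m` (functions `Fin m → Fin n`). -/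
def marg {m n : ℕ} (X : (Fin m → Fin n) → ℝ) (k : Fin m) (j : Fin n) : ℝ :=
  ∑ v : Fin m → Fin n, if v k = j then X v else 0

/-- Entrywise (Frobenius) inner product of tensors. -/
def dot {m n : ℕ} (C X : (Fin m → Fin n) → ℝ) : ℝ :=
  ∑ v : Fin m → Fin n, C v * X v

/-- The partial transport polytope `Π^s(r_1, …, r_m)`. -/
def PiPartial {m n : ℕ} (r : Fin m → Fin n → ℝ) (s : ℝ) :
    Set ((Fin m → Fin n) → ℝ) :=
  {X | (∀ v, 0 ≤ X v) ∧ (∀ k j, marg X k j ≤ r k j) ∧ ∑ v : Fin m → Fin n, X v = s}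

/-- The transport polytope `Π(a_1, …, a_m)` with equality marginal constraints. -/
def PiEq {m n : ℕ} (a : Fin m → Fin n → ℝ) : Set ((Fin m → Fin n) → ℝ) :=
  {X | (∀ v, 0 ≤ X v) ∧ ∀ k j, marg X k j = a k j}

/-- Embedding of `[n]^m` into `[n+1]^m`. -/
def emb {m n : ℕ} (v : Fin m → Fin n) : Fin m → Fin (n + 1) :=
  fun i => (v i).castSucc

/-- Restriction of a tensor on `[n+1]^m` to the indices in `[n]^m`. -/
def restr {m n : ℕ} (X : (Fin m → Fin (n + 1)) → ℝ) : (Fin m → Fin n) → ℝ :=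
  fun v => X (emb v)

/-- The number of coordinates of `u` equal to `n+1` (i.e. `Fin.last n`); `u ∈ T_S`
with `|S| = nLast u`. -/
def nLast {m n : ℕ} (u : Fin m → Fin (n + 1)) : ℕ :=
  (univ.filter fun ℓ => u ℓ = Fin.last n).card

/-- Extended cost tensor: the original cost on `T_∅ = [n]^m`, and value `A i` on the
`i`-th layer `∪_{|S| = i} T_S`. -/
def extCost {m n : ℕ} (C : (Fin m → Fin n) → ℝ) (A : ℕ → ℝ) :
    (Fin m → Fin (n + 1)) → ℝ :=
  fun u =>
    if h : ∀ i, u i ≠ Fin.last n then C fun i => (u i).castPred (h i)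
    else A (nLast u)

/-- Total mass of `X` on the sublayer `T_S`. -/
def layerSum {m n : ℕ} (X : (Fin m → Fin (n + 1)) → ℝ) (S : Finset (Fin m)) : ℝ :=
  ∑ u : Fin m → Fin (n + 1), if ∀ ℓ, (u ℓ = Fin.last n ↔ ℓ ∈ S) then X u else 0

/-- First-form extended marginals `r̄_k^{(1)} = [r_k, Σ_r/(m−1) − ‖r_k‖₁ − s/(m−1)]`. -/
def extMarg1 {m n : ℕ} (r : Fin m → Fin n → ℝ) (s : ℝ) : Fin m → Fin (n + 1) → ℝ :=
  fun k => Fin.snoc (r k)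
    ((∑ i, ∑ j, r i j) / ((m : ℝ) - 1) - (∑ j, r k j) - s / ((m : ℝ) - 1))

/-- Second-form extended marginals `r̄_k^{(2)} = [r_k, Σ_{i≠k} ‖r_i‖₁ − (m−1)s]`. -/
def extMarg2 {m n : ℕ} (r : Fin m → Fin n → ℝ) (s : ℝ) : Fin m → Fin (n + 1) → ℝ :=
  fun k => Fin.snoc (r k) ((∑ i ∈ univ.erase k, ∑ j, r i j) - ((m : ℝ) - 1) * s)

end MPOT

open MPOT

/-!
Every marginal of `X̄` has total mass `(Σ_r − s)/(m−1)`, so this is the total mass `T` of `X̄`.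
An index outside `[n]^m` has some coordinate equal to `n+1`, so by the union bound the mass
outside `[n]^m` is at most `Σ_k [r̄_k^{(1)}]_{n+1} = mT − Σ_r`. The mass on `[n]^m` is therefore
at least `Σ_r − (m−1)T = s`.
-/

namespace MPOT

variable {m n : ℕ}

theorem sum_marg (X : (Fin m → Fin n) → ℝ) (k : Fin m) :
    ∑ j, marg X k j = ∑ v, X v := by
  simp only [marg]
  rw [Finset.sum_comm]
  simp

theorem sum_comp_emb_eq_sum_filter (X : (Fin m → Fin (n + 1)) → ℝ) :
    ∑ v, X (emb v) = ∑ u with ∀ i, u i ≠ Fin.last n, X u := by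
  refine Finset.sum_bij (fun v _ => emb v) (fun v _ => ?_) (fun v _ w _ h => ?_)
    (fun u hu => ?_) (fun v _ => rfl)
  · simp [emb]
  · funext i
    exact Fin.castSucc_injective n (congrFun h i)
  · simp only [mem_filter, mem_univ, true_and] at hu
    exact ⟨fun i => (u i).castPred (hu i), mem_univ _, funext fun i => Fin.castSucc_castPred _ _⟩

theorem le_sum_ite_eq_last {u : Fin m → Fin (n + 1)} {x : ℝ} (hx : 0 ≤ x)
    (hu : ∃ i, u i = Fin.last n) : x ≤ ∑ k, if u k = Fin.last n then x else 0 := by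
  obtain ⟨i, hi⟩ := hu
  calc x = if u i = Fin.last n then x else 0 := (if_pos hi).symm
    _ ≤ _ := single_le_sum (f := fun k => if u k = Fin.last n then x else 0)
        (fun k _ => by split_ifs <;> simp [hx]) (mem_univ i)

theorem sum_sub_sum_comp_emb_le_sum_marg_last {X : (Fin m → Fin (n + 1)) → ℝ}
    (hX : ∀ u, 0 ≤ X u) : ∑ u, X u - ∑ v, X (emb v) ≤ ∑ k, marg X k (Fin.last n) := by
  rw [sum_comp_emb_eq_sum_filter,
    ← sum_filter_add_sum_filter_not univ (fun u => ∀ i, u i ≠ Fin.last n), add_sub_cancel_left]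
  simp only [marg]
  rw [Finset.sum_comm]
  calc ∑ u with ¬∀ i, u i ≠ Fin.last n, X u
      ≤ ∑ u with ¬∀ i, u i ≠ Fin.last n, ∑ k, if u k = Fin.last n then X u else 0 :=
        sum_le_sum fun u hu => le_sum_ite_eq_last (hX u) (by simpa using hu)
    _ ≤ ∑ u, ∑ k, if u k = Fin.last n then X u else 0 :=
        sum_le_sum_of_subset_of_nonneg (filter_subset _ _) fun u _ _ =>
          sum_nonneg fun k _ => by split_ifs <;> simp [hX u]

theorem extMarg1_last (r : Fin m → Fin n → ℝ) (s : ℝ) (k : Fin m) :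
    extMarg1 r s k (Fin.last n) =
      (∑ i, ∑ j, r i j) / ((m : ℝ) - 1) - ∑ j, r k j - s / ((m : ℝ) - 1) := by
  simp [extMarg1]

theorem sum_extMarg1 (r : Fin m → Fin n → ℝ) (s : ℝ) (k : Fin m) :
    ∑ j, extMarg1 r s k j = ((∑ i, ∑ j, r i j) - s) / ((m : ℝ) - 1) := by
  rw [Fin.sum_univ_castSucc, extMarg1_last]
  simp only [extMarg1, Fin.snoc_castSucc]
  ring

theorem sum_extMarg1_last (hm : (m : ℝ) - 1 ≠ 0) (r : Fin m → Fin n → ℝ) (s : ℝ) :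
    ∑ k, extMarg1 r s k (Fin.last n) = ((∑ i, ∑ j, r i j) - s) / ((m : ℝ) - 1) - s := by
  simp only [extMarg1_last, sum_sub_distrib, sum_const, card_univ, Fintype.card_fin, nsmul_eq_mul]
  field_simp
  ring

end MPOT

theorem mpot_first_form_mass_lower_bound_general {m n : ℕ} (hm : 2 ≤ m)
    (r : Fin m → Fin n → ℝ)
    (s : ℝ)
    (Xb : (Fin m → Fin (n + 1)) → ℝ) (hmem : Xb ∈ PiEq (extMarg1 r s)) :
    s ≤ (∑ v : Fin m → Fin n, Xb (emb v)) ∧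
      (0 < s → ∃ u : Fin m → Fin n, 0 < Xb (emb u)) := by
  obtain ⟨hX, hmarg⟩ := hmem
  have hm1 : (m : ℝ) - 1 ≠ 0 := sub_ne_zero.2 (by norm_cast; omega)
  have htotal : ∑ u, Xb u = ((∑ i, ∑ j, r i j) - s) / ((m : ℝ) - 1) := by
    rw [← sum_marg Xb ⟨0, by omega⟩, ← sum_extMarg1 r s]
    exact sum_congr rfl fun j _ => hmarg _ j
  have houter : ∑ k, marg Xb k (Fin.last n) = ∑ u, Xb u - s := by
    simp only [hmarg, sum_extMarg1_last hm1, htotal]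
  have hmass : s ≤ ∑ v, Xb (emb v) := by
    linarith [sum_sub_sum_comp_emb_le_sum_marg_last hX]
  refine ⟨hmass, fun hs => ?_⟩
  obtain ⟨u, -, hu⟩ := exists_lt_of_sum_lt (s := univ) (f := fun _ => (0 : ℝ))
    (g := fun u => Xb (emb u)) (by simpa using hs.trans_le hmass)
  exact ⟨u, hu⟩

/-- Step 1 of the proof of Theorem 3.1: under the mass condition
`Σ_r ≥ (m−1)‖r_k‖₁ + s` for all `k`, every plan in `Π(r̄_1^{(1)}, …, r̄_m^{(1)})` puts
total mass at least `s` on the indices in `[n]^m`; in particular, when `s > 0`, some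
entry indexed by `[n]^m` is positive. -/
theorem mpot_first_form_mass_lower_bound {m n : ℕ} (hm : 2 ≤ m) (hn : 1 ≤ n)
    (r : Fin m → Fin n → ℝ) (hr : ∀ k j, 0 ≤ r k j)
    (s : ℝ) (hs0 : 0 ≤ s) (hs : ∀ k, s ≤ ∑ j, r k j)
    (hcond : ∀ k, ((m : ℝ) - 1) * (∑ j, r k j) + s ≤ ∑ i, ∑ j, r i j)
    (Xb : (Fin m → Fin (n + 1)) → ℝ) (hmem : Xb ∈ PiEq (extMarg1 r s)) :
    s ≤ (∑ v : Fin m → Fin n, Xb (emb v)) ∧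
      (0 < s → ∃ u : Fin m → Fin n, 0 < Xb (emb u)) :=
  mpot_first_form_mass_lower_bound_general hm r s Xb hmem
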